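/- arXiv:1711.02388 — 2 statements merged into one kernel-verified Lean document; each statement's English description precedes it below -/
import Mathlib

section
/- Let a : ℝ, b : ℂ with 1 + a ≥ c₁ > 0 and (1+a)² - |b|² ≥ c₂ > 0. Set λ := √((1+a)² - |b|²) and let s₁ := (1+a+λ)/√(2λ(1+a+λ)), s₂ := -b/√(2λ(1+a+λ)). Then the matrix S = [[s₁, s₂],[conj(s₂), s₁]] is invertible (its determinant is s₁² - |s₂|² = 1) and S⁻¹ · (E·L) · S = λ·E, where L = [[1+a, b],[conj(b), 1+a]] and E = diag(1,-1). -/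
/-!
With `u = 1 + a`, the unnormalised matrix `T = [[u + λ, -b], [-conj b, u + λ]]` already
intertwines `E L` with `λ E`, because its columns are eigenvectors of `E L` for `±λ`
(this only uses `λ² = u² - |b|²`). Its determinant is `(u + λ)² - |b|² = 2λ(u + λ) = N²`,
so `S = N⁻¹ T` has determinant one and the intertwining relation survives the scaling.
-/

open Matrix ComplexConjugate

lemma det_conjSymm_fin_two (x : ℝ) (y : ℂ) :
    !![(x : ℂ), y; conj y, x].det = ((x ^ 2 - ‖y‖ ^ 2 : ℝ) : ℂ) := by
  rw [det_fin_two_of, Complex.mul_conj, Complex.normSq_eq_norm_sq]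
  push_cast
  ring

lemma sigmaZ_mul_conjSymm_mul_eigenbasis {u lam : ℝ} (b : ℂ)
    (hlam : lam ^ 2 = u ^ 2 - ‖b‖ ^ 2) :
    !![1, 0; 0, -1] * !![(u : ℂ), b; conj b, u] *
        !![((u + lam : ℝ) : ℂ), -b; conj (-b), ((u + lam : ℝ) : ℂ)] =
      !![((u + lam : ℝ) : ℂ), -b; conj (-b), ((u + lam : ℝ) : ℂ)] *
        ((lam : ℂ) • !![1, 0; 0, -1]) := by
  have hnorm : b * conj b = (u : ℂ) ^ 2 - (lam : ℂ) ^ 2 := by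
    rw [Complex.mul_conj, Complex.normSq_eq_norm_sq]
    exact_mod_cast (by linarith : ‖b‖ ^ 2 = u ^ 2 - lam ^ 2)
  ext i j
  fin_cases i <;> fin_cases j <;> simp [Matrix.mul_apply, Fin.sum_univ_two]
  · linear_combination -hnorm
  · ring
  · ring
  · linear_combination hnorm

theorem stmt1 (a : ℝ) (b : ℂ) (c₁ c₂ : ℝ) (hc₁ : 0 < c₁) (hc₂ : 0 < c₂)
    (h1 : 1 + a ≥ c₁) (h2 : (1 + a) ^ 2 - ‖b‖ ^ 2 ≥ c₂) :
    let lam := Real.sqrt ((1 + a) ^ 2 - ‖b‖ ^ 2)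
    let N := Real.sqrt (2 * lam * (1 + a + lam))
    let s₁ : ℂ := (((1 + a + lam) / N : ℝ) : ℂ)
    let s₂ : ℂ := -b / (N : ℂ)
    let S : Matrix (Fin 2) (Fin 2) ℂ := !![s₁, s₂; (starRingEnd ℂ) s₂, s₁]
    let E : Matrix (Fin 2) (Fin 2) ℂ := !![1, 0; 0, -1]
    let L : Matrix (Fin 2) (Fin 2) ℂ :=
      !![((1 + a : ℝ) : ℂ), b; (starRingEnd ℂ) b, ((1 + a : ℝ) : ℂ)]
    S.det = 1 ∧ IsUnit S ∧ S⁻¹ * (E * L) * S = (lam : ℂ) • E := by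
  intro lam N s₁ s₂ S E L
  set T : Matrix (Fin 2) (Fin 2) ℂ :=
    !![((1 + a + lam : ℝ) : ℂ), -b; conj (-b), ((1 + a + lam : ℝ) : ℂ)]
  have hlam_sq : lam ^ 2 = (1 + a) ^ 2 - ‖b‖ ^ 2 := Real.sq_sqrt (hc₂.le.trans h2)
  have hlam_pos : 0 < lam := Real.sqrt_pos.mpr (hc₂.trans_le h2)
  have hu_pos : 0 < 1 + a := hc₁.trans_le h1
  have hN_sq_pos : 0 < 2 * lam * (1 + a + lam) := by positivity
  have hN_sq : N ^ 2 = 2 * lam * (1 + a + lam) := Real.sq_sqrt hN_sq_pos.le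
  have hN : (N : ℂ) ≠ 0 := by exact_mod_cast (Real.sqrt_pos.mpr hN_sq_pos).ne'
  have hS : S = (N : ℂ)⁻¹ • T := by
    ext i j; fin_cases i <;> fin_cases j <;> simp [S, T, s₁, s₂, div_eq_inv_mul]
  have hdet : S.det = 1 := by
    rw [hS, det_smul, det_conjSymm_fin_two, Fintype.card_fin, norm_neg, inv_pow,
      inv_mul_eq_one₀ (pow_ne_zero 2 hN)]
    norm_cast
    rw [hN_sq]
    linear_combination hlam_sq
  have hunit : IsUnit S.det := hdet ▸ isUnit_one
  refine ⟨hdet, (isUnit_iff_isUnit_det S).mpr hunit, ?_⟩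
  have hTS : E * L * S = S * ((lam : ℂ) • E) := by
    rw [hS, mul_smul_comm, smul_mul_assoc]
    congr 1
    exact sigmaZ_mul_conjSymm_mul_eigenbasis (u := 1 + a) b hlam_sq
  rw [Matrix.mul_assoc, hTS]
  exact nonsing_inv_mul_cancel_left S _ hunit
end

section
/- For any complex number z, the matrix exponential of Z := [[0, z],[conj(z), 0]] equals [[cosh|z|, c₂(z)],[conj(c₂(z)), cosh|z|]], where c₂(z) = (z/|z|)·sinh|z| for z ≠ 0 and c₂(0) = 0. Moreover det(exp Z) = 1, so exp Z is invertible. -/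
open Matrix

noncomputable def c₂fun (z : ℂ) : ℂ :=
  z * ∑' k : ℕ, ((‖z‖ : ℂ) ^ 2) ^ k / ((2 * k + 1).factorial : ℂ)

/-!
Since `Z ^ 2 = ‖z‖ ^ 2 • 1`, the even terms of the exponential series of `Z` sum to
`cosh ‖z‖ • 1` and the odd ones to `S • Z`, where `S = ∑ ‖z‖ ^ (2k) / (2k+1)!` is `sinh ‖z‖ / ‖z‖`;
the off-diagonal entries are then `c₂ z` and its conjugate. The determinant is
`cosh² ‖z‖ - ‖z‖ ² S ² = cosh² ‖z‖ - sinh² ‖z‖ = 1`.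
-/

open Nat NormedSpace

/-- `sinhcSq (w ^ 2) = sinh w / w`, written as a power series in `w ^ 2` so that it needs no
case split at `w = 0`. -/
noncomputable def sinhcSq (t : ℂ) : ℂ :=
  ∑' k : ℕ, t ^ k / ((2 * k + 1)! : ℂ)

theorem summable_pow_div_factorial_two_mul_add_one (t : ℂ) :
    Summable fun k : ℕ => t ^ k / ((2 * k + 1)! : ℂ) := by
  refine (Real.summable_pow_div_factorial ‖t‖).of_norm_bounded fun k => ?_
  rw [norm_div, norm_pow, Complex.norm_natCast]
  gcongr
  omega

theorem hasSum_sinhcSq (t : ℂ) :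
    HasSum (fun k : ℕ => t ^ k / ((2 * k + 1)! : ℂ)) (sinhcSq t) :=
  (summable_pow_div_factorial_two_mul_add_one t).hasSum

theorem mul_sinhcSq_sq (w : ℂ) : w * sinhcSq (w ^ 2) = Complex.sinh w := by
  rw [Complex.sinh_eq_tsum, sinhcSq, ← tsum_mul_left]
  congr 1 with k
  ring

theorem conj_sinhcSq (t : ℂ) : starRingEnd ℂ (sinhcSq t) = sinhcSq (starRingEnd ℂ t) := by
  simp only [sinhcSq, Complex.conj_tsum, map_div₀, map_pow, map_natCast]

section Algebra

variable {A : Type*} [Ring A] [Algebra ℂ A] [TopologicalSpace A] [IsTopologicalRing A]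
  [ContinuousSMul ℂ A] [T2Space A]

theorem exp_eq_cosh_add_sinhcSq_smul {Z : A} {w : ℂ} (hZ : Z ^ 2 = w ^ 2 • (1 : A)) :
    exp Z = Complex.cosh w • (1 : A) + sinhcSq (w ^ 2) • Z := by
  have h_even (k : ℕ) : Z ^ (2 * k) = w ^ (2 * k) • (1 : A) := by
    rw [pow_mul, hZ, smul_pow, one_pow, pow_mul]
  have h_odd (k : ℕ) : Z ^ (2 * k + 1) = (w ^ 2) ^ k • Z := by
    rw [pow_succ, pow_mul, hZ, smul_pow, one_pow, smul_one_mul]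
  rw [exp_eq_tsum ℂ]
  refine (HasSum.even_add_odd ?_ ?_).tsum_eq
  · convert (Complex.hasSum_cosh w).smul_const (1 : A) using 2 with k
    rw [h_even, smul_smul, div_eq_inv_mul]
  · convert (hasSum_sinhcSq (w ^ 2)).smul_const Z using 2 with k
    rw [h_odd, smul_smul, div_eq_inv_mul]

end Algebra

theorem sq_antidiag_conj (z : ℂ) :
    (!![0, z; starRingEnd ℂ z, 0] : Matrix (Fin 2) (Fin 2) ℂ) ^ 2 =
      (‖z‖ : ℂ) ^ 2 • (1 : Matrix (Fin 2) (Fin 2) ℂ) := by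
  rw [sq, ← Complex.conj_mul']
  ext i j
  fin_cases i <;> fin_cases j <;> simp [mul_comm]

theorem c₂fun_eq_mul_sinhcSq (z : ℂ) : c₂fun z = z * sinhcSq ((‖z‖ : ℂ) ^ 2) := rfl

theorem exp_antidiag_conj (z : ℂ) :
    exp (!![0, z; starRingEnd ℂ z, 0] : Matrix (Fin 2) (Fin 2) ℂ) =
      !![(Real.cosh ‖z‖ : ℂ), c₂fun z; starRingEnd ℂ (c₂fun z), (Real.cosh ‖z‖ : ℂ)] := by
  have hS : starRingEnd ℂ (sinhcSq ((‖z‖ : ℂ) ^ 2)) = sinhcSq ((‖z‖ : ℂ) ^ 2) := by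
    rw [conj_sinhcSq, map_pow, Complex.conj_ofReal]
  rw [exp_eq_cosh_add_sinhcSq_smul (sq_antidiag_conj z), c₂fun_eq_mul_sinhcSq, map_mul, hS,
    Complex.ofReal_cosh]
  ext i j
  fin_cases i <;> fin_cases j <;> simp [mul_comm]

theorem det_exp_antidiag_conj (z : ℂ) :
    (exp (!![0, z; starRingEnd ℂ z, 0] : Matrix (Fin 2) (Fin 2) ℂ)).det = 1 := by
  rw [exp_antidiag_conj, det_fin_two_of, c₂fun_eq_mul_sinhcSq, map_mul, conj_sinhcSq, map_pow,
    Complex.conj_ofReal, Complex.ofReal_cosh]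
  set S := sinhcSq ((‖z‖ : ℂ) ^ 2)
  have h_sinh : (‖z‖ : ℂ) * S = Complex.sinh ‖z‖ := mul_sinhcSq_sq _
  linear_combination Complex.cosh_sq_sub_sinh_sq (‖z‖ : ℂ)
    - ((‖z‖ : ℂ) * S + Complex.sinh ‖z‖) * h_sinh - S ^ 2 * Complex.mul_conj' z

theorem stmt4 (z : ℂ) :
    NormedSpace.exp (!![0, z; (starRingEnd ℂ) z, 0] : Matrix (Fin 2) (Fin 2) ℂ) =
      !![(Real.cosh (‖z‖) : ℂ), c₂fun z;
         (starRingEnd ℂ) (c₂fun z), (Real.cosh (‖z‖) : ℂ)] ∧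
    (NormedSpace.exp (!![0, z; (starRingEnd ℂ) z, 0] : Matrix (Fin 2) (Fin 2) ℂ)).det = 1 ∧
    IsUnit (NormedSpace.exp (!![0, z; (starRingEnd ℂ) z, 0] : Matrix (Fin 2) (Fin 2) ℂ)) :=
  ⟨exp_antidiag_conj z, det_exp_antidiag_conj z, Matrix.isUnit_exp _⟩
end
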